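/- Let (Γ, μ) be a finite measure space, c ∈ L^∞(Γ) nonnegative, and λ, λ_h : Γ → ℝ² measurable with |λ| ≤ 1, |λ_h| ≤ 1 a.e., λ · u_τ = |u_τ| and λ_h · w_τ = |w_τ| a.e., where u_τ, w_τ, z ∈ L²(Γ; ℝ²). Then ∫_Γ c (λ_h - λ) · (u_τ - z) dμ ≤ 2 ∫_Γ c |z - w_τ| dμ. -/

import Mathlib

open MeasureTheory

/-- The `T₃` estimate: with `|λ| ≤ 1`, `|λ_h| ≤ 1` a.e., `λ · u_τ = ‖u_τ‖` and
`λ_h · w_τ = ‖w_τ‖` a.e., one has `∫ c (λ_h - λ)·(u_τ - z) ≤ 2 ∫ c ‖z - w_τ‖`. -/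
theorem multiplier_difference_estimate
    {Γ : Type*} [MeasurableSpace Γ] (μ : Measure Γ) [IsFiniteMeasure μ]
    (c : Γ → ℝ) (hc : MemLp c ⊤ μ) (hc0 : ∀ᵐ x ∂μ, 0 ≤ c x)
    (lam lamh uτ wτ z : Γ → EuclideanSpace ℝ (Fin 2))
    (hlam : Measurable lam) (hlamh : Measurable lamh)
    (hlam1 : ∀ᵐ x ∂μ, ‖lam x‖ ≤ 1) (hlamh1 : ∀ᵐ x ∂μ, ‖lamh x‖ ≤ 1)
    (hlamu : ∀ᵐ x ∂μ, (inner ℝ (lam x) (uτ x) : ℝ) = ‖uτ x‖)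
    (hlamhw : ∀ᵐ x ∂μ, (inner ℝ (lamh x) (wτ x) : ℝ) = ‖wτ x‖)
    (huτ : MemLp uτ 2 μ) (hwτ : MemLp wτ 2 μ) (hz : MemLp z 2 μ) :
    (∫ x, c x * (inner ℝ (lamh x - lam x) (uτ x - z x) : ℝ) ∂μ)
      ≤ 2 * ∫ x, c x * ‖z x - wτ x‖ ∂μ := by
  -- a.e. bound on c
  set C : ℝ := (eLpNormEssSup c μ).toReal with hCdef
  have hCae : ∀ᵐ x ∂μ, ‖c x‖ ≤ C := by
    have h := ae_le_eLpNormEssSup (f := c) (μ := μ)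
    have hlt : eLpNormEssSup c μ < ⊤ := by
      have := hc.2; rwa [eLpNorm_exponent_top] at this
    filter_upwards [h] with x hx
    have : (‖c x‖₊ : ENNReal) ≤ eLpNormEssSup c μ := hx
    have := ENNReal.toReal_mono hlt.ne this
    simpa using this
  have huz : Integrable (fun x => uτ x - z x) μ := (huτ.sub hz).integrable one_le_two
  have hzw : Integrable (fun x => z x - wτ x) μ := (hz.sub hwτ).integrable one_le_two
  have hmeas_inner : AEStronglyMeasurable
      (fun x => (inner ℝ (lamh x - lam x) (uτ x - z x) : ℝ)) μ :=
    ((hlamh.sub hlam).aestronglyMeasurable).inner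
      (huτ.aestronglyMeasurable.sub hz.aestronglyMeasurable)
  have hint_inner : Integrable
      (fun x => (inner ℝ (lamh x - lam x) (uτ x - z x) : ℝ)) μ := by
    refine Integrable.mono' (huz.norm.const_mul 2) hmeas_inner ?_
    filter_upwards [hlam1, hlamh1] with x h1 h2
    calc ‖(inner ℝ (lamh x - lam x) (uτ x - z x) : ℝ)‖
        ≤ ‖lamh x - lam x‖ * ‖uτ x - z x‖ := by
          simpa using abs_real_inner_le_norm (lamh x - lam x) (uτ x - z x)
      _ ≤ 2 * ‖uτ x - z x‖ := by
          have : ‖lamh x - lam x‖ ≤ 2 := by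
            calc ‖lamh x - lam x‖ ≤ ‖lamh x‖ + ‖lam x‖ := norm_sub_le _ _
              _ ≤ 2 := by linarith
          exact mul_le_mul_of_nonneg_right this (norm_nonneg _)
  have hf_int : Integrable
      (fun x => c x * (inner ℝ (lamh x - lam x) (uτ x - z x) : ℝ)) μ :=
    hint_inner.bdd_mul hc.aestronglyMeasurable hCae
  have hg_int : Integrable (fun x => c x * ‖z x - wτ x‖) μ :=
    hzw.norm.bdd_mul hc.aestronglyMeasurable hCae
  have hae : ∀ᵐ x ∂μ,
      c x * (inner ℝ (lamh x - lam x) (uτ x - z x) : ℝ)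
        ≤ 2 * (c x * ‖z x - wτ x‖) := by
    filter_upwards [hc0, hlam1, hlamh1, hlamu, hlamhw] with x hcx h1 h2 hu hw
    have key : (inner ℝ (lamh x - lam x) (uτ x - z x) : ℝ) ≤ 2 * ‖z x - wτ x‖ := by
      have e1 : (inner ℝ (lamh x - lam x) (uτ x - z x) : ℝ)
          = inner ℝ (lamh x) (uτ x) - inner ℝ (lamh x) (z x)
            - inner ℝ (lam x) (uτ x) + inner ℝ (lam x) (z x) := by
        simp [inner_sub_left, inner_sub_right]; ring
      have e2 : (inner ℝ (lamh x) (z x) : ℝ)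
          = inner ℝ (lamh x) (z x - wτ x) + ‖wτ x‖ := by
        rw [← hw]; simp [inner_sub_right]
      have hbu : (inner ℝ (lamh x) (uτ x) : ℝ) ≤ ‖uτ x‖ := by
        calc (inner ℝ (lamh x) (uτ x) : ℝ) ≤ ‖lamh x‖ * ‖uτ x‖ :=
              real_inner_le_norm _ _
          _ ≤ 1 * ‖uτ x‖ := mul_le_mul_of_nonneg_right h2 (norm_nonneg _)
          _ = ‖uτ x‖ := one_mul _
      have hbzw : |(inner ℝ (lamh x) (z x - wτ x) : ℝ)| ≤ ‖z x - wτ x‖ := by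
        calc |(inner ℝ (lamh x) (z x - wτ x) : ℝ)| ≤ ‖lamh x‖ * ‖z x - wτ x‖ :=
              abs_real_inner_le_norm _ _
          _ ≤ 1 * ‖z x - wτ x‖ := mul_le_mul_of_nonneg_right h2 (norm_nonneg _)
          _ = ‖z x - wτ x‖ := one_mul _
      have hbz : (inner ℝ (lam x) (z x) : ℝ) ≤ ‖z x‖ := by
        calc (inner ℝ (lam x) (z x) : ℝ) ≤ ‖lam x‖ * ‖z x‖ := real_inner_le_norm _ _
          _ ≤ 1 * ‖z x‖ := mul_le_mul_of_nonneg_right h1 (norm_nonneg _)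
          _ = ‖z x‖ := one_mul _
      have htri : ‖z x‖ ≤ ‖z x - wτ x‖ + ‖wτ x‖ := by
        calc ‖z x‖ = ‖(z x - wτ x) + wτ x‖ := by rw [sub_add_cancel]
          _ ≤ ‖z x - wτ x‖ + ‖wτ x‖ := norm_add_le _ _
      have habs := abs_le.mp hbzw
      rw [e1, e2, hu]
      linarith [habs.1, habs.2]
    calc c x * (inner ℝ (lamh x - lam x) (uτ x - z x) : ℝ)
        ≤ c x * (2 * ‖z x - wτ x‖) := mul_le_mul_of_nonneg_left key hcx
      _ = 2 * (c x * ‖z x - wτ x‖) := by ring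
  calc (∫ x, c x * (inner ℝ (lamh x - lam x) (uτ x - z x) : ℝ) ∂μ)
      ≤ ∫ x, 2 * (c x * ‖z x - wτ x‖) ∂μ :=
        integral_mono_ae hf_int (hg_int.const_mul 2) hae
    _ = 2 * ∫ x, c x * ‖z x - wτ x‖ ∂μ := integral_const_mul 2 _
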